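/- Let M = S^1 be a circle of length 2R equipped with its inner (arc-length) metric. Then OR_M(k) = 2 for all k ≥ 2. More precisely, for any total order T on S^1 and any ε > 0 there exists a snake x_1 <_T x_2 <_T x_3 on 3 points such that x_1 and x_3 lie in the ε-neighborhood of some point p and x_2 lies in the ε-neighborhood of the point antipodal to p. -/

import Mathlib

open scoped Classical

/-- Length of the path visiting the points of a list in order,
for a distance function `d`. -/
noncomputable def pathLen {α : Type*} (d : α → α → ℝ) : List α → ℝ
  | [] => 0
  | [_] => 0
  | a :: b :: l => d a b + pathLen d (b :: l)

/-- `lopt d X` : minimal length of a path visiting all points of the finite set `X`. -/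
noncomputable def lopt {α : Type*} (d : α → α → ℝ) (X : Finset α) : ℝ :=
  sInf {r : ℝ | ∃ l : List α, l.Nodup ∧ l.toFinset = X ∧ pathLen d l = r}

/-- `lord d T X` : length of the path visiting all points of `X` in the order `T`. -/
noncomputable def lord {α : Type*} (d : α → α → ℝ) (T : LinearOrder α) (X : Finset α) : ℝ :=
  sInf {r : ℝ | ∃ l : List α, l.Nodup ∧ l.toFinset = X ∧ List.Pairwise T.lt l ∧ pathLen d l = r}

/-- The order ratio function `OR_{M,T}(k)`. -/
noncomputable def ORd {α : Type*} (d : α → α → ℝ) (T : LinearOrder α) (k : ℕ) : ℝ :=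
  sSup {r : ℝ | ∃ X : Finset α, 2 ≤ X.card ∧ X.card ≤ k + 1 ∧ r = lord d T X / lopt d X}

/-- The order ratio function of the (unordered) space: infimum over all total orders. -/
noncomputable def ORsp {α : Type*} (d : α → α → ℝ) (k : ℕ) : ℝ :=
  ⨅ T : LinearOrder α, ORd d T k

/-!
Lower bound. For any order `T`, the set of points `z` with `z <_T z + ρ` (`ρ` the half period) is
exchanged with its complement by the antipodal map, so by connectedness of the circle it contains
points `a` arbitrarily close to points `c` outside it; comparing `a`, `c`, `a + ρ`, `c + ρ`
under `T` gives a snake, whose ordered length is close to `2R` while its optimal path has length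
close to `R`.

Upper bound. Order the circle by angle and cut it at the points into gaps. A step of a path
covers the gaps of the shorter arc it spans, whose lengths add up to the length of the step, and
a path through all points misses at most one gap `j` (it would otherwise have to cross between the
two arcs cut out by two missed gaps). So every path has length at least `2R - gap j`, while the
angular path has length at most `2 (2R - gap j)`.
-/

section PathLength

variable {α : Type*}

lemma pathLen_map {β : Type*} (d : α → α → ℝ) (g : β → α) :
    ∀ l : List β, pathLen d (l.map g) = pathLen (fun a b => d (g a) (g b)) l
  | [] | [_] => rfl
  | a :: b :: l => by
    simp only [List.map_cons, pathLen, ← pathLen_map d g (b :: l)]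

lemma pathLen_eq_sum_getD (d : α → α → ℝ) (x₀ : α) :
    ∀ l : List α,
      pathLen d l = ∑ k ∈ Finset.range (l.length - 1), d (l.getD k x₀) (l.getD (k + 1) x₀)
  | [] | [_] => by simp [pathLen]
  | a :: b :: l => by
    rw [pathLen, pathLen_eq_sum_getD d x₀ (b :: l)]
    simp [Finset.sum_range_succ' _ (l.length), add_comm]

lemma exists_pairwise_lt_toFinset_eq (T : LinearOrder α) (X : Finset α) :
    ∃ l : List α, l.Nodup ∧ l.toFinset = X ∧ l.Pairwise T.lt ∧ l.length = X.card := by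
  let _ := T
  exact ⟨X.sort (· ≤ ·), X.sort_nodup _, by simp, X.sortedLT_sort.pairwise, X.length_sort _⟩

lemma card_eq_three_of_lt (T : LinearOrder α) {x₁ x₂ x₃ : α} (h₁₂ : T.lt x₁ x₂)
    (h₂₃ : T.lt x₂ x₃) : ({x₁, x₂, x₃} : Finset α).card = 3 := by
  let _ := T
  exact Finset.card_eq_three.2 ⟨x₁, x₂, x₃, h₁₂.ne, (h₁₂.trans h₂₃).ne, h₂₃.ne, rfl⟩

variable [PseudoMetricSpace α]

lemma pathLen_nonneg : ∀ l : List α, 0 ≤ pathLen dist l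
  | [] | [_] => le_rfl
  | _ :: b :: l => add_nonneg dist_nonneg (pathLen_nonneg (b :: l))

lemma dist_le_pathLen {a b : α} : ∀ {l : List α}, a ∈ l → b ∈ l → dist a b ≤ pathLen dist l
  | [_], ha, hb => by simp_all [pathLen]
  | x :: y :: l, ha, hb => by
    have tail_le : ∀ {z}, z ∈ y :: l → dist x z ≤ pathLen dist (x :: y :: l) := fun hz =>
      (dist_triangle x y _).trans
        (add_le_add_right (dist_le_pathLen (List.mem_cons_self ..) hz) _)
    rcases List.mem_cons.1 ha with hax | ha'
    · subst hax
      rcases List.mem_cons.1 hb with hbx | hb'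
      · simpa [hbx] using pathLen_nonneg (a :: y :: l)
      · exact tail_le hb'
    · rcases List.mem_cons.1 hb with hbx | hb'
      · subst hbx
        exact dist_comm a b ▸ tail_le ha'
      · exact (dist_le_pathLen ha' hb').trans (le_add_of_nonneg_left dist_nonneg)

lemma pathLen_le_mul_of_forall_dist_le {c : ℝ} (hc : 0 ≤ c) :
    ∀ {l : List α}, (∀ a ∈ l, ∀ b ∈ l, dist a b ≤ c) →
      pathLen dist l ≤ (l.length - 1 : ℕ) * c
  | [], _ | [_], _ => by simp [pathLen]
  | a :: b :: l, h => by
    have hab := h a (by simp) b (by simp)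
    have ih := pathLen_le_mul_of_forall_dist_le hc (l := b :: l) fun x hx y hy =>
      h x (List.mem_cons_of_mem a hx) y (List.mem_cons_of_mem a hy)
    simp only [pathLen, List.length_cons, Nat.add_sub_cancel] at ih ⊢
    push_cast at ih ⊢
    linarith

end PathLength

section OrderRatio

open Filter Topology

variable {α : Type*} [MetricSpace α]

lemma lopt_nonneg (X : Finset α) : 0 ≤ lopt dist X :=
  Real.sInf_nonneg (by rintro _ ⟨l, -, -, rfl⟩; exact pathLen_nonneg l)

lemma lopt_le_pathLen {X : Finset α} {l : List α} (hnd : l.Nodup) (hX : l.toFinset = X) :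
    lopt dist X ≤ pathLen dist l :=
  csInf_le ⟨0, by rintro _ ⟨l', -, -, rfl⟩; exact pathLen_nonneg l'⟩ ⟨l, hnd, hX, rfl⟩

lemma le_lopt {X : Finset α} {c : ℝ}
    (h : ∀ l : List α, l.Nodup → l.toFinset = X → c ≤ pathLen dist l) : c ≤ lopt dist X :=
  le_csInf ⟨_, X.toList, X.nodup_toList, X.toList_toFinset, rfl⟩
    (by rintro _ ⟨l, hnd, hX, rfl⟩; exact h l hnd hX)

lemma dist_le_lopt {X : Finset α} {a b : α} (ha : a ∈ X) (hb : b ∈ X) :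
    dist a b ≤ lopt dist X :=
  le_lopt fun _ _ hX => dist_le_pathLen (by simpa [← hX] using ha) (by simpa [← hX] using hb)

lemma lopt_pos {X : Finset α} (hX : 2 ≤ X.card) : 0 < lopt dist X := by
  obtain ⟨a, ha, b, hb, hab⟩ := Finset.one_lt_card.1 hX
  exact (dist_pos.2 hab).trans_le (dist_le_lopt ha hb)

variable (T : LinearOrder α)

lemma lord_nonneg (X : Finset α) : 0 ≤ lord dist T X :=
  Real.sInf_nonneg (by rintro _ ⟨l, -, -, -, rfl⟩; exact pathLen_nonneg l)

lemma lord_le_pathLen {X : Finset α} {l : List α} (hnd : l.Nodup) (hX : l.toFinset = X)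
    (hl : l.Pairwise T.lt) : lord dist T X ≤ pathLen dist l :=
  csInf_le ⟨0, by rintro _ ⟨l', -, -, -, rfl⟩; exact pathLen_nonneg l'⟩ ⟨l, hnd, hX, hl, rfl⟩

lemma lord_eq_pathLen {X : Finset α} {l : List α} (hnd : l.Nodup) (hX : l.toFinset = X)
    (hl : l.Pairwise T.lt) : lord dist T X = pathLen dist l := by
  refine le_antisymm (lord_le_pathLen T hnd hX hl) (le_csInf ⟨_, l, hnd, hX, hl, rfl⟩ ?_)
  rintro _ ⟨l', hnd', hX', hl', rfl⟩
  let _ := T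
  have hperm := List.perm_of_nodup_nodup_toFinset_eq hnd' hnd (hX'.trans hX.symm)
  rw [hperm.eq_of_pairwise' (hl'.imp le_of_lt) (hl.imp le_of_lt)]

lemma lord_le_mul_lopt (X : Finset α) : lord dist T X ≤ (X.card - 1 : ℕ) * lopt dist X := by
  obtain ⟨l, hnd, hX, hl, hlen⟩ := exists_pairwise_lt_toFinset_eq T X
  have hmem : ∀ {a}, a ∈ l → a ∈ X := fun ha => hX ▸ List.mem_toFinset.2 ha
  calc lord dist T X ≤ pathLen dist l := lord_le_pathLen T hnd hX hl
    _ ≤ (l.length - 1 : ℕ) * lopt dist X := pathLen_le_mul_of_forall_dist_le (lopt_nonneg X)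
        fun _ ha _ hb => dist_le_lopt (hmem ha) (hmem hb)
    _ = (X.card - 1 : ℕ) * lopt dist X := by rw [hlen]

lemma lord_div_lopt_le_ORd {k : ℕ} {X : Finset α} (h2 : 2 ≤ X.card) (hk : X.card ≤ k + 1) :
    lord dist T X / lopt dist X ≤ ORd dist T k := by
  refine le_csSup ⟨k, ?_⟩ ⟨X, h2, hk, rfl⟩
  rintro _ ⟨Y, h2, hk, rfl⟩
  rw [div_le_iff₀ (lopt_pos h2)]
  refine (lord_le_mul_lopt T Y).trans (mul_le_mul_of_nonneg_right ?_ (lopt_nonneg Y))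
  exact_mod_cast (by omega : Y.card - 1 ≤ k)

lemma ORd_nonneg (k : ℕ) : 0 ≤ ORd dist T k :=
  Real.sSup_nonneg <| by
    rintro _ ⟨X, -, -, rfl⟩
    exact div_nonneg (lord_nonneg T X) (lopt_nonneg X)

lemma ORd_le_of_forall_lord_le {k : ℕ} {c : ℝ} (hc : 0 ≤ c)
    (h : ∀ X : Finset α, lord dist T X ≤ c * lopt dist X) : ORd dist T k ≤ c :=
  Real.sSup_le (by rintro _ ⟨X, h2, -, rfl⟩; rw [div_le_iff₀ (lopt_pos h2)]; exact h X) hc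

lemma ORsp_eq_of_forall_le {k : ℕ} {c : ℝ} (hlow : ∀ T : LinearOrder α, c ≤ ORd dist T k)
    (hup : ORd dist T k ≤ c) : ORsp (dist : α → α → ℝ) k = c :=
  have : Nonempty (LinearOrder α) := ⟨T⟩
  le_antisymm ((ciInf_le ⟨0, by rintro _ ⟨T', rfl⟩; exact ORd_nonneg T' k⟩ T).trans hup)
    (le_ciInf hlow)

lemma div_le_lord_div_lopt_of_snake {x₁ x₂ x₃ p q : α} {R ε : ℝ} (h₁₂ : T.lt x₁ x₂)
    (h₂₃ : T.lt x₂ x₃) (hpq : dist p q = R) (h₁ : dist x₁ p < ε) (h₃ : dist x₃ p < ε)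
    (h₂ : dist x₂ q < ε) :
    (2 * R - 4 * ε) / (R + 4 * ε) ≤
      lord dist T {x₁, x₂, x₃} / lopt dist {x₁, x₂, x₃} := by
  have h₁₃ : T.lt x₁ x₃ := by let _ := T; exact h₁₂.trans h₂₃
  have hne : x₁ ≠ x₂ ∧ x₁ ≠ x₃ ∧ x₂ ≠ x₃ := by let _ := T; exact ⟨h₁₂.ne, h₁₃.ne, h₂₃.ne⟩
  have hlord : lord dist T {x₁, x₂, x₃} = dist x₁ x₂ + dist x₂ x₃ := by
    rw [lord_eq_pathLen T (l := [x₁, x₂, x₃]) (by simp [hne]) (by simp)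
      (by simp [h₁₂, h₁₃, h₂₃])]
    simp [pathLen]
  have hlopt : lopt dist {x₁, x₂, x₃} ≤ dist x₂ x₁ + dist x₁ x₃ := by
    have := lopt_le_pathLen (X := {x₁, x₂, x₃}) (l := [x₂, x₁, x₃])
      (by simp [hne, hne.1.symm]) (by ext; simp; tauto)
    simpa [pathLen] using this
  have h₁₂R : R - 2 * ε ≤ dist x₁ x₂ := by
    linarith [dist_triangle4 p x₁ x₂ q, dist_comm p x₁]
  have h₂₃R : R - 2 * ε ≤ dist x₂ x₃ := by
    linarith [dist_triangle4 p x₃ x₂ q, dist_comm p x₃, dist_comm x₃ x₂]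
  have h₂₁R : dist x₂ x₁ ≤ R + 2 * ε := by
    linarith [dist_triangle4 x₂ q p x₁, dist_comm q p, dist_comm p x₁]
  have h₁₃R : dist x₁ x₃ ≤ 2 * ε := by linarith [dist_triangle x₁ p x₃, dist_comm p x₃]
  exact div_le_div₀ (lord_nonneg T _) (by linarith)
    (lopt_pos (by rw [card_eq_three_of_lt T h₁₂ h₂₃]; norm_num)) (by linarith)

theorem two_le_ORd_of_snakes {R : ℝ} (hR : 0 < R) {k : ℕ} (hk : 2 ≤ k)
    (hsnake : ∀ ε : ℝ, 0 < ε → ∃ x₁ x₂ x₃ p q : α, T.lt x₁ x₂ ∧ T.lt x₂ x₃ ∧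
      dist p q = R ∧ dist x₁ p < ε ∧ dist x₃ p < ε ∧ dist x₂ q < ε) :
    2 ≤ ORd dist T k := by
  have hcont : ContinuousAt (fun ε : ℝ => (2 * R - 4 * ε) / (R + 4 * ε)) 0 :=
    ContinuousAt.div (by fun_prop) (by fun_prop) (by simpa using hR.ne')
  have hlim : Tendsto (fun ε : ℝ => (2 * R - 4 * ε) / (R + 4 * ε)) (𝓝[>] 0) (𝓝 2) := by
    refine tendsto_nhdsWithin_of_tendsto_nhds ?_
    convert hcont.tendsto using 2
    field_simp
    ring
  refine le_of_tendsto hlim ?_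
  filter_upwards [self_mem_nhdsWithin] with ε (hε : 0 < ε)
  obtain ⟨x₁, x₂, x₃, p, q, h₁₂, h₂₃, hpq, h₁, h₃, h₂⟩ := hsnake ε hε
  refine (div_le_lord_div_lopt_of_snake T h₁₂ h₂₃ hpq h₁ h₃ h₂).trans
    (lord_div_lopt_le_ORd T ?_ ?_) <;>
  rw [card_eq_three_of_lt T h₁₂ h₂₃] <;> omega

end OrderRatio

section Snake

variable {α : Type*} [PseudoMetricSpace α]

lemma exists_mem_notMem_dist_lt [PreconnectedSpace α] {S : Set α} (hS : S.Nonempty)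
    (hSc : Sᶜ.Nonempty) {ε : ℝ} (hε : 0 < ε) : ∃ a ∈ S, ∃ c ∉ S, dist a c < ε := by
  by_contra! h
  have hopen : IsOpen S := Metric.isOpen_iff.2 fun a ha =>
    ⟨ε, hε, fun c hc => by_contra fun hcS => (h a ha c hcS).not_gt (Metric.mem_ball'.1 hc)⟩
  have hclosed : IsClosed S := isOpen_compl_iff.1 <| Metric.isOpen_iff.2 fun c hc =>
    ⟨ε, hε, fun a ha haS => (h a haS c hc).not_gt (Metric.mem_ball.1 ha)⟩
  rcases isClopen_iff.1 ⟨hclosed, hopen⟩ with rfl | rfl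
  · exact Set.not_nonempty_empty hS
  · simp at hSc

variable (T : LinearOrder α) {f : α → α}

lemma exists_snake_of_lt_of_lt (hf : Isometry f) (hinv : Function.Involutive f) {a c : α}
    {ε : ℝ} (ha : T.lt a (f a)) (hc : T.lt (f c) c) (hac : dist a c < ε) (hafc : a ≠ f c) :
    ∃ x₁ x₂ x₃ z : α, T.lt x₁ x₂ ∧ T.lt x₂ x₃ ∧
      dist x₁ z < ε ∧ dist x₃ z < ε ∧ dist x₂ (f z) < ε := by
  let _ := T
  have hε : 0 < ε := dist_nonneg.trans_lt hac
  have hca : dist c a < ε := dist_comm a c ▸ hac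
  have hfcfa : dist (f c) (f a) < ε := hf.dist_eq c a ▸ hca
  rcases lt_trichotomy (f a) (f c) with h | h | h
  · exact ⟨a, f a, c, a, ha, h.trans hc, by simpa, hca, by simpa⟩
  · cases hinv.injective h
    exact absurd (ha.trans hc) (lt_irrefl a)
  · rcases lt_trichotomy a (f c) with h' | h' | h'
    · exact ⟨a, f c, c, a, h', hc, by simpa, hca, hfcfa⟩
    · exact absurd h' hafc
    · exact ⟨f c, a, f a, f a, h', ha, hfcfa, by simpa, by simpa [hinv a]⟩

theorem exists_snake_of_isometry [PreconnectedSpace α] [Nonempty α] (hf : Isometry f)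
    (hinv : Function.Involutive f) {ε : ℝ} (hε : 0 < ε) (hfar : ∀ z, ε ≤ dist z (f z)) :
    ∃ x₁ x₂ x₃ z : α, T.lt x₁ x₂ ∧ T.lt x₂ x₃ ∧
      dist x₁ z < ε ∧ dist x₃ z < ε ∧ dist x₂ (f z) < ε := by
  let _ := T
  set S := {z | z < f z}
  have hne : ∀ z, f z ≠ z := fun z h => by simpa [h] using hε.trans_le (hfar z)
  have hflip : ∀ z, z ∉ S → f z ∈ S := fun z hz => by
    simpa [S, hinv z] using (not_lt.1 hz).lt_of_ne (hne z)
  have hflip' : ∀ z, z ∈ S → f z ∉ S := fun z hz hfz => by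
    simp only [S, Set.mem_ofPred_eq, hinv z] at hz hfz
    exact lt_asymm hz hfz
  obtain ⟨z⟩ := ‹Nonempty α›
  have hS : S.Nonempty ∧ Sᶜ.Nonempty := by
    by_cases hz : z ∈ S
    exacts [⟨⟨z, hz⟩, ⟨f z, hflip' z hz⟩⟩, ⟨⟨f z, hflip z hz⟩, ⟨z, hz⟩⟩]
  obtain ⟨a, ha, c, hc, hac⟩ := exists_mem_notMem_dist_lt hS.1 hS.2 hε
  have hfc : f c < c := by simpa [S, hinv c] using hflip c hc
  have hafc : a ≠ f c := by
    rintro rfl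
    exact (hfar c).not_gt (by rwa [dist_comm])
  exact exists_snake_of_lt_of_lt T hf hinv ha hfc hac hafc

end Snake

namespace AddCircle

variable {p : ℝ}

lemma involutive_add_half_period : Function.Involutive (· + ((p / 2 : ℝ) : AddCircle p)) :=
  fun z => by simp only [add_assoc, ← coe_add, add_halves, coe_period, add_zero]

variable [Fact (0 < p)]

lemma dist_add_half_period (z : AddCircle p) : dist z (z + ↑(p / 2)) = p / 2 := by
  rw [dist_eq_norm, sub_add_cancel_left, norm_neg, norm_half_period_eq,
    abs_of_pos (Fact.out : 0 < p)]

theorem exists_snake (T : LinearOrder (AddCircle p)) {ε : ℝ} (hε : 0 < ε) :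
    ∃ x₁ x₂ x₃ z : AddCircle p, T.lt x₁ x₂ ∧ T.lt x₂ x₃ ∧
      dist x₁ z < ε ∧ dist x₃ z < ε ∧ dist x₂ (z + ↑(p / 2)) < ε := by
  have hp : 0 < p / 2 := half_pos Fact.out
  obtain ⟨x₁, x₂, x₃, z, h₁₂, h₂₃, h₁, h₃, h₂⟩ := exists_snake_of_isometry T
    (isometry_add_right _) involutive_add_half_period (lt_min hε hp)
    fun z => (dist_add_half_period z).symm ▸ min_le_right ε (p / 2)
  exact ⟨x₁, x₂, x₃, z, h₁₂, h₂₃, h₁.trans_le (min_le_left ..), h₃.trans_le (min_le_left ..),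
    h₂.trans_le (min_le_left ..)⟩

end AddCircle

lemma Finset.sum_biUnion_le_sum_sum {ι κ : Type*} [DecidableEq ι] {f : ι → ℝ} (s : Finset κ)
    (t : κ → Finset ι) (hf : ∀ i ∈ s.biUnion t, 0 ≤ f i) :
    ∑ i ∈ s.biUnion t, f i ≤ ∑ a ∈ s, ∑ i ∈ t a, f i := by
  classical
  induction s using Finset.induction_on with
  | empty => simp
  | insert a s ha ih =>
    rw [Finset.biUnion_insert] at hf ⊢
    rw [Finset.sum_insert ha]
    have hunion := Finset.sum_union_inter (s₁ := t a) (s₂ := s.biUnion t) (f := f)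
    have hinter : 0 ≤ ∑ i ∈ t a ∩ s.biUnion t, f i :=
      Finset.sum_nonneg fun i hi => hf i (Finset.mem_union_left _ (Finset.mem_inter.1 hi).1)
    linarith [ih fun i hi => hf i (Finset.mem_union_right _ hi)]

-- the distance of the classes of `x` and `y` in `ℝ ⧸ pℤ`, provided `|x - y| ≤ p`
noncomputable def circleDist (p x y : ℝ) : ℝ := min |x - y| (p - |x - y|)

section Gaps

variable {p : ℝ} {c : ℕ → ℝ} {m : ℕ}

variable (p c m) in
/-- The arc from `c i` to the next point; the last one, `i = m - 1`, wraps around. -/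
noncomputable def gap (i : ℕ) : ℝ := (if i + 1 < m then c (i + 1) else c 0 + p) - c i

variable (p c m) in
/-- The gaps making up the shorter of the two arcs between `c u` and `c v`. -/
noncomputable def shortArc (u v : ℕ) : Finset ℕ :=
  if c (max u v) - c (min u v) ≤ p - (c (max u v) - c (min u v)) then
    Finset.Ico (min u v) (max u v)
  else Finset.range m \ Finset.Ico (min u v) (max u v)

lemma gap_of_succ_lt {i : ℕ} (hi : i + 1 < m) : gap p c m i = c (i + 1) - c i := by
  rw [gap, if_pos hi]

lemma gap_nonneg (hc : ∀ i j, i < j → j < m → c i < c j) (hp : c (m - 1) - c 0 ≤ p) {i : ℕ}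
    (hi : i < m) : 0 ≤ gap p c m i := by
  by_cases h : i + 1 < m
  · rw [gap_of_succ_lt h]
    linarith [hc i (i + 1) (by omega) h]
  · rw [gap, if_neg h, show i = m - 1 by omega]
    linarith

lemma sum_gap_Ico {a b : ℕ} (hab : a ≤ b) (hb : b < m) :
    ∑ i ∈ Finset.Ico a b, gap p c m i = c b - c a := by
  rw [Finset.sum_congr rfl fun i hi => gap_of_succ_lt (by simp at hi; omega),
    Finset.sum_Ico_eq_sub _ hab, Finset.sum_range_sub, Finset.sum_range_sub]
  ring

lemma sum_gap_range (hm : 0 < m) : ∑ i ∈ Finset.range m, gap p c m i = p := by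
  obtain ⟨n, rfl⟩ : ∃ n, m = n + 1 := ⟨m - 1, by omega⟩
  rw [Finset.sum_range_succ, Finset.range_eq_Ico, sum_gap_Ico n.zero_le n.lt_succ_self, gap,
    if_neg (lt_irrefl _)]
  ring

lemma shortArc_subset_range {u v : ℕ} (hu : u < m) (hv : v < m) :
    shortArc p c m u v ⊆ Finset.range m := by
  unfold shortArc
  split_ifs
  · exact fun i hi => by simp at hi ⊢; omega
  · exact Finset.sdiff_subset

lemma sum_gap_shortArc (hc : ∀ i j, i < j → j < m → c i < c j) {u v : ℕ} (hu : u < m)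
    (hv : v < m) : ∑ i ∈ shortArc p c m u v, gap p c m i = circleDist p (c u) (c v) := by
  have habs : |c u - c v| = c (max u v) - c (min u v) := by
    rcases lt_trichotomy u v with h | rfl | h
    · rw [max_eq_right h.le, min_eq_left h.le, abs_sub_comm,
        abs_of_pos (by linarith [hc u v h hv])]
    · simp
    · rw [max_eq_left h.le, min_eq_right h.le, abs_of_pos (by linarith [hc v u h hu])]
  have hIco := sum_gap_Ico (p := p) (c := c) (min_le_max (a := u) (b := v)) (max_lt hu hv)
  unfold shortArc circleDist
  rw [habs]
  split_ifs with h
  · rw [hIco, min_eq_left h]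
  · rw [Finset.sum_sdiff_eq_sub (fun i hi => by simp at hi ⊢; omega), sum_gap_range (by omega),
      hIco, min_eq_right (le_of_not_ge h)]

/-- A step `u → v` covering neither gap `i` nor gap `j` stays on one side of the cut they make. -/
lemma side_iff_of_notMem_shortArc {i j u v : ℕ} (hj : j < m)
    (hi : i ∉ shortArc p c m u v) (hj' : j ∉ shortArc p c m u v) :
    (i < u ∧ u ≤ j ↔ i < v ∧ v ≤ j) := by
  unfold shortArc at hi hj'
  split_ifs at hi hj' <;>
    simp only [Finset.mem_Ico, Finset.mem_sdiff, Finset.mem_range] at hi hj' <;> omega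

lemma exists_forall_ne_mem_shortArc {τ : ℕ → ℕ} {n : ℕ} (hτ : ∀ k ≤ n, τ k < m)
    (hsurj : ∀ i < m, ∃ k ≤ n, τ k = i) :
    ∃ j < m, ∀ i < m, i ≠ j → ∃ k < n, i ∈ shortArc p c m (τ k) (τ (k + 1)) := by
  have key : ∀ i j, i < j → j < m →
      (∃ k < n, i ∈ shortArc p c m (τ k) (τ (k + 1))) ∨
        ∃ k < n, j ∈ shortArc p c m (τ k) (τ (k + 1)) := by
    intro i j hij hj
    by_contra! h
    have hside : ∀ k ≤ n, (i < τ k ∧ τ k ≤ j ↔ i < τ 0 ∧ τ 0 ≤ j) := by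
      intro k hk
      induction k with
      | zero => rfl
      | succ k ih =>
        exact (side_iff_of_notMem_shortArc hj (h.1 k hk) (h.2 k hk)).symm.trans (ih (by omega))
    obtain ⟨k₀, hk₀, h₀⟩ := hsurj 0 (by omega)
    obtain ⟨k₁, hk₁, h₁⟩ := hsurj (i + 1) (by omega)
    have := (hside k₀ hk₀).2 ((hside k₁ hk₁).1 (by omega))
    omega
  by_cases hall : ∀ i < m, ∃ k < n, i ∈ shortArc p c m (τ k) (τ (k + 1))
  · exact ⟨0, (Nat.zero_le _).trans_lt (hτ 0 (Nat.zero_le n)), fun i hi _ => hall i hi⟩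
  · push Not at hall
    obtain ⟨j, hj, hjnot⟩ := hall
    refine ⟨j, hj, fun i hi hij => ?_⟩
    have hj' : ¬∃ k < n, j ∈ shortArc p c m (τ k) (τ (k + 1)) := fun ⟨k, hk, h⟩ => hjnot k hk h
    rcases lt_or_gt_of_ne hij with h | h
    · exact (key i j h hj).resolve_right hj'
    · exact (key j i h hi).resolve_left hj'

lemma exists_sub_gap_le_sum_circleDist (hc : ∀ i j, i < j → j < m → c i < c j)
    (hp : c (m - 1) - c 0 ≤ p) {τ : ℕ → ℕ} {n : ℕ} (hτ : ∀ k ≤ n, τ k < m)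
    (hsurj : ∀ i < m, ∃ k ≤ n, τ k = i) :
    ∃ j < m,
      p - gap p c m j ≤ ∑ k ∈ Finset.range n, circleDist p (c (τ k)) (c (τ (k + 1))) := by
  obtain ⟨j, hj, hcov⟩ := exists_forall_ne_mem_shortArc (p := p) (c := c) hτ hsurj
  have hsub : ∀ k ∈ Finset.range n, shortArc p c m (τ k) (τ (k + 1)) ⊆ Finset.range m :=
    fun k hk => by
      simp only [Finset.mem_range] at hk
      exact shortArc_subset_range (hτ k (by omega)) (hτ (k + 1) (by omega))
  have hnonneg : ∀ i ∈ (Finset.range n).biUnion fun k => shortArc p c m (τ k) (τ (k + 1)),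
      0 ≤ gap p c m i := fun i hi => by
    obtain ⟨k, hk, hik⟩ := Finset.mem_biUnion.1 hi
    exact gap_nonneg hc hp (Finset.mem_range.1 (hsub k hk hik))
  refine ⟨j, hj, ?_⟩
  calc p - gap p c m j = ∑ i ∈ (Finset.range m).erase j, gap p c m i := by
        rw [Finset.sum_erase_eq_sub (Finset.mem_range.2 hj), sum_gap_range (by omega)]
    _ ≤ ∑ i ∈ (Finset.range n).biUnion fun k => shortArc p c m (τ k) (τ (k + 1)),
          gap p c m i := by
        refine Finset.sum_le_sum_of_subset_of_nonneg (fun i hi => ?_) fun i hi _ => hnonneg i hi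
        obtain ⟨hij, hi⟩ := Finset.mem_erase.1 hi
        obtain ⟨k, hk, hik⟩ := hcov i (Finset.mem_range.1 hi) hij
        exact Finset.mem_biUnion.2 ⟨k, Finset.mem_range.2 hk, hik⟩
    _ ≤ ∑ k ∈ Finset.range n, ∑ i ∈ shortArc p c m (τ k) (τ (k + 1)), gap p c m i :=
        Finset.sum_biUnion_le_sum_sum _ _ hnonneg
    _ = ∑ k ∈ Finset.range n, circleDist p (c (τ k)) (c (τ (k + 1))) :=
        Finset.sum_congr rfl fun k hk => by
          simp only [Finset.mem_range] at hk
          exact sum_gap_shortArc hc (hτ k (by omega)) (hτ (k + 1) (by omega))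

lemma sum_circleDist_succ_le (hc : ∀ i j, i < j → j < m → c i < c j)
    (hp : c (m - 1) - c 0 ≤ p) {j : ℕ} (hj : j < m) :
    ∑ i ∈ Finset.range (m - 1), circleDist p (c i) (c (i + 1)) ≤ 2 * (p - gap p c m j) := by
  have hstep : ∀ i ∈ Finset.range (m - 1),
      circleDist p (c i) (c (i + 1)) = min (gap p c m i) (p - gap p c m i) := fun i hi => by
    simp only [Finset.mem_range] at hi
    rw [circleDist, gap_of_succ_lt (by omega), abs_sub_comm,
      abs_of_pos (by linarith [hc i (i + 1) (by omega) (by omega)])]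
  have hinner : ∑ i ∈ Finset.range (m - 1), gap p c m i = p - gap p c m (m - 1) := by
    have h := Finset.sum_range_succ (fun i => gap p c m i) (m - 1)
    rw [Nat.sub_add_cancel (by omega : 1 ≤ m), sum_gap_range (by omega)] at h
    linarith
  rcases Nat.lt_or_ge j (m - 1) with hj' | hj'
  · have hjmem : j ∈ Finset.range (m - 1) := Finset.mem_range.2 hj'
    have herase : ∑ i ∈ (Finset.range (m - 1)).erase j, circleDist p (c i) (c (i + 1)) ≤
        ∑ i ∈ (Finset.range (m - 1)).erase j, gap p c m i :=
      Finset.sum_le_sum fun i hi =>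
        (hstep i (Finset.mem_of_mem_erase hi)).trans_le (min_le_left _ _)
    have hsplit := Finset.sum_erase_add _ (fun i => circleDist p (c i) (c (i + 1))) hjmem
    have hsplit' := Finset.sum_erase_add _ (fun i => gap p c m i) hjmem
    linarith [hstep j hjmem ▸ min_le_right (gap p c m j) (p - gap p c m j),
      gap_nonneg hc hp (by omega : m - 1 < m)]
  · have hle : ∑ i ∈ Finset.range (m - 1), circleDist p (c i) (c (i + 1)) ≤
        ∑ i ∈ Finset.range (m - 1), gap p c m i :=
      Finset.sum_le_sum fun i hi => (hstep i hi).trans_le (min_le_left _ _)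
    have hinner_nonneg : 0 ≤ ∑ i ∈ Finset.range (m - 1), gap p c m i :=
      Finset.sum_nonneg fun i hi => gap_nonneg hc hp (by simp at hi; omega)
    rw [show j = m - 1 by omega]
    linarith

theorem sum_circleDist_succ_le_two_mul (hc : ∀ i j, i < j → j < m → c i < c j)
    (hp : c (m - 1) - c 0 ≤ p) {τ : ℕ → ℕ} {n : ℕ} (hτ : ∀ k ≤ n, τ k < m)
    (hsurj : ∀ i < m, ∃ k ≤ n, τ k = i) :
    ∑ i ∈ Finset.range (m - 1), circleDist p (c i) (c (i + 1)) ≤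
      2 * ∑ k ∈ Finset.range n, circleDist p (c (τ k)) (c (τ (k + 1))) := by
  obtain ⟨j, hj, hpath⟩ := exists_sub_gap_le_sum_circleDist hc hp hτ hsurj
  linarith [sum_circleDist_succ_le hc hp hj]

end Gaps

theorem pathLen_circleDist_le_two_mul {p : ℝ} {s l : List ℝ} (hs : s.Pairwise (· < ·))
    (hp : ∀ x ∈ s, ∀ y ∈ s, x - y ≤ p) (hl : ∀ x, x ∈ l ↔ x ∈ s) :
    pathLen (circleDist p) s ≤ 2 * pathLen (circleDist p) l := by
  by_cases hl₀ : l = []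
  · subst hl₀
    obtain rfl : s = [] := List.eq_nil_iff_forall_not_mem.2 fun x hx => by simpa using (hl x).2 hx
    simp [pathLen]
  set c : ℕ → ℝ := fun i => s.getD i 0
  set τ : ℕ → ℕ := fun k => s.idxOf (l.getD k 0)
  have hmem : ∀ k ≤ l.length - 1, l.getD k 0 ∈ s := fun k hk => by
    rw [← hl, List.getD_eq_getElem _ _ (by have := List.length_pos_iff.2 hl₀; omega)]
    exact List.getElem_mem _
  have hτ : ∀ k ≤ l.length - 1, τ k < s.length := fun k hk =>
    List.idxOf_lt_length_of_mem (hmem k hk)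
  have hcτ : ∀ k ≤ l.length - 1, c (τ k) = l.getD k 0 := fun k hk => by
    simp only [c, τ, List.getD_eq_getElem _ _ (hτ k hk), List.getElem_idxOf]
  have hc : ∀ i j, i < j → j < s.length → c i < c j := fun i j hij hj => by
    simp only [c, List.getD_eq_getElem _ _ hj, List.getD_eq_getElem _ _ (hij.trans hj)]
    exact List.pairwise_iff_getElem.1 hs i j _ hj hij
  have hsurj : ∀ i < s.length, ∃ k ≤ l.length - 1, τ k = i := fun i hi => by
    obtain ⟨k, hk, hki⟩ := List.mem_iff_getElem.1 ((hl _).2 (List.getElem_mem hi))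
    refine ⟨k, by omega, ?_⟩
    simp only [τ, List.getD_eq_getElem _ _ hk, hki, hs.nodup.idxOf_getElem]
  have hs₀ : 0 < s.length := (hτ 0 (Nat.zero_le _)).pos
  have hcp : c (s.length - 1) - c 0 ≤ p := by
    simp only [c, List.getD_eq_getElem _ _ (by omega : s.length - 1 < s.length),
      List.getD_eq_getElem _ _ hs₀]
    exact hp _ (List.getElem_mem _) _ (List.getElem_mem _)
  have hpath : ∑ k ∈ Finset.range (l.length - 1), circleDist p (l.getD k 0) (l.getD (k + 1) 0) =
      ∑ k ∈ Finset.range (l.length - 1), circleDist p (c (τ k)) (c (τ (k + 1))) :=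
    Finset.sum_congr rfl fun k hk => by
      rw [hcτ k (by simp at hk; omega), hcτ (k + 1) (by simp at hk; omega)]
  rw [pathLen_eq_sum_getD _ 0 s, pathLen_eq_sum_getD _ 0 l, hpath]
  exact sum_circleDist_succ_le_two_mul hc hcp hτ hsurj

namespace AddCircle

variable {p : ℝ} [Fact (0 < p)]

noncomputable def rep (x : AddCircle p) : ℝ := equivIco p 0 x

lemma rep_mem (x : AddCircle p) : rep x ∈ Set.Ico 0 p := by
  have h := (equivIco p 0 x).2
  exact ⟨h.1, h.2.trans_eq (zero_add p)⟩

lemma coe_rep (x : AddCircle p) : (rep x : AddCircle p) = x :=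
  (equivIco p 0).symm_apply_apply x

lemma rep_injective : Function.Injective (rep : AddCircle p → ℝ) :=
  Function.LeftInverse.injective coe_rep

lemma norm_coe_eq_min {u : ℝ} (h₀ : 0 ≤ u) (hu : u ≤ p) : ‖(u : AddCircle p)‖ = min u (p - u) := by
  have hp : 0 < p := Fact.out
  rcases le_total u (p / 2) with h | h
  · rw [min_eq_left (by linarith), (norm_coe_eq_abs_iff p hp.ne').2
      (by rw [abs_of_nonneg h₀, abs_of_pos hp]; exact h), abs_of_nonneg h₀]
  · have hcoe : (u : AddCircle p) = ((u - p : ℝ) : AddCircle p) := by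
      rw [coe_sub, coe_period, sub_zero]
    rw [min_eq_right (by linarith), hcoe, (norm_coe_eq_abs_iff p hp.ne').2
      (by rw [abs_of_nonpos (by linarith), abs_of_pos hp]; linarith), abs_of_nonpos (by linarith),
      neg_sub]

lemma dist_eq_circleDist (x y : AddCircle p) : dist x y = circleDist p (rep x) (rep y) := by
  wlog h : rep y ≤ rep x generalizing x y
  · rw [dist_comm, this y x (le_of_not_ge h), circleDist, circleDist, abs_sub_comm]
  have hxy : x - y = ((rep x - rep y : ℝ) : AddCircle p) := by rw [coe_sub, coe_rep, coe_rep]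
  rw [dist_eq_norm, hxy, norm_coe_eq_min (sub_nonneg.2 h)
    (by linarith [(rep_mem x).2, (rep_mem y).1]), circleDist, abs_of_nonneg (sub_nonneg.2 h)]

noncomputable abbrev angularOrder : LinearOrder (AddCircle p) :=
  LinearOrder.lift' rep rep_injective

lemma lord_angularOrder_le (X : Finset (AddCircle p)) :
    lord dist angularOrder X ≤ 2 * lopt dist X := by
  have hdist : ∀ l : List (AddCircle p), pathLen dist l = pathLen (circleDist p) (l.map rep) :=
    fun l => by rw [pathLen_map]; congr 1; funext x y; exact dist_eq_circleDist x y
  obtain ⟨L, hnd, hX, hL, -⟩ := exists_pairwise_lt_toFinset_eq angularOrder X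
  have : pathLen dist L / 2 ≤ lopt dist X := le_lopt fun l _ hl => by
    rw [div_le_iff₀' two_pos, hdist, hdist]
    refine pathLen_circleDist_le_two_mul (List.pairwise_map.2 hL) ?_ fun y => ?_
    · simp only [List.mem_map]
      rintro _ ⟨x, -, rfl⟩ _ ⟨y, -, rfl⟩
      linarith [(rep_mem x).2, (rep_mem y).1]
    · have hmem : ∀ x, x ∈ l ↔ x ∈ L := fun x => by
        have hlx : x ∈ l ↔ x ∈ X := by simpa using Finset.ext_iff.1 hl x
        have hLx : x ∈ L ↔ x ∈ X := by simpa using Finset.ext_iff.1 hX x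
        exact hlx.trans hLx.symm
      simp only [List.mem_map, hmem]
  linarith [lord_le_pathLen angularOrder hnd hX hL]

lemma ORd_angularOrder_le_two (k : ℕ) : ORd dist (angularOrder (p := p)) k ≤ 2 :=
  ORd_le_of_forall_lord_le _ zero_le_two lord_angularOrder_le

end AddCircle

/-- For the circle of length `2R` (modelled as `AddCircle (2R)` with its quotient metric,
which is the inner arc metric), `OR(k) = 2` for all `k ≥ 2`; moreover for every order `T`
and every `ε > 0` there is a snake `x₁ <_T x₂ <_T x₃` with `x₁, x₃` in the `ε`-neighbourhood
of some point `p` and `x₂` in the `ε`-neighbourhood of the antipodal point of `p`. -/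
theorem stmt8 (R : ℝ) (hR : 0 < R) :
    (∀ k : ℕ, 2 ≤ k → ORsp (fun x y : AddCircle (2 * R) => dist x y) k = 2) ∧
    (∀ T : LinearOrder (AddCircle (2 * R)), ∀ ε : ℝ, 0 < ε →
      ∃ x1 x2 x3 p q : AddCircle (2 * R),
        T.lt x1 x2 ∧ T.lt x2 x3 ∧
        dist p q = R ∧ dist x1 p < ε ∧ dist x3 p < ε ∧ dist x2 q < ε) := by
  have : Fact (0 < 2 * R) := ⟨by positivity⟩
  have hsnake : ∀ T : LinearOrder (AddCircle (2 * R)), ∀ ε : ℝ, 0 < ε →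
      ∃ x1 x2 x3 p q : AddCircle (2 * R), T.lt x1 x2 ∧ T.lt x2 x3 ∧
        dist p q = R ∧ dist x1 p < ε ∧ dist x3 p < ε ∧ dist x2 q < ε := by
    intro T ε hε
    obtain ⟨x₁, x₂, x₃, z, h₁₂, h₂₃, h₁, h₃, h₂⟩ := AddCircle.exists_snake T hε
    refine ⟨x₁, x₂, x₃, z, _, h₁₂, h₂₃, ?_, h₁, h₃, h₂⟩
    rw [AddCircle.dist_add_half_period]
    ring
  exact ⟨fun k hk => ORsp_eq_of_forall_le AddCircle.angularOrder
    (fun T => two_le_ORd_of_snakes T hR hk (hsnake T)) (AddCircle.ORd_angularOrder_le_two k),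
    hsnake⟩
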